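/- arXiv:2405.17017 — 2 statements merged into one kernel-verified Lean document; each statement's English description precedes it below -/
import Mathlib

section
/- Assume there is c > 0 with p(x'|x,a,μ,μ̃) ≥ c for all x', x, a, μ, μ̃. Then for every fixed pair (x,a) ∈ 𝒳 × 𝒜, all distributions μ, μ̃, μ̃' on 𝒳 and every Q-table Q, one has max_{y∈𝒳} |𝒫̃₃^{(x,a)}(μ,Q,μ̃)(y) − 𝒫̃₃^{(x,a)}(μ,Q,μ̃')(y)| ≤ (L_p^{loc} + 2 − |𝒳| c) ‖μ̃ − μ̃'‖₁, where |𝒳| is the cardinality of 𝒳. -/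
open Finset

/-- A probability distribution on a finite set, viewed as a nonnegative
function summing to one. -/
def IsDist {X : Type*} [Fintype X] (μ : X → ℝ) : Prop :=
  (∀ x, 0 ≤ μ x) ∧ ∑ x, μ x = 1

/-- The ℓ¹ distance `‖μ - μ'‖₁` between two functions on a finite set. -/
def l1Dist {X : Type*} [Fintype X] (μ μ' : X → ℝ) : ℝ := ∑ x, |μ x - μ' x|

/-- The softmin map with parameter `φ`. -/
noncomputable def softmin {A : Type*} [Fintype A] (φ : ℝ) (z : A → ℝ) (a : A) : ℝ :=
  Real.exp (-φ * z a) / ∑ a', Real.exp (-φ * z a')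

/-- The operator `𝒫̃₃^{(x,a)}`. -/
noncomputable def Pt3 {X A : Type*} [Fintype X] [Fintype A] [DecidableEq X]
    (φ : ℝ) (p : X → A → (X → ℝ) → (X → ℝ) → X → ℝ)
    (x : X) (a : A) (μ : X → ℝ) (Q : X → A → ℝ) (μt : X → ℝ) (y : X) : ℝ :=
  (∑ x' ∈ Finset.univ.erase x, μt x' * ∑ a', softmin φ (Q x') a' * p x' a' μ μt y)
    + μt x * p x a μ μt y - μt y

section Aux

lemma softmin_nonneg' {A : Type*} [Fintype A] (φ : ℝ) (z : A → ℝ) (a : A) :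
    0 ≤ softmin φ z a :=
  div_nonneg (Real.exp_nonneg _) (Finset.sum_nonneg fun _ _ => Real.exp_nonneg _)

lemma softmin_sum_one' {A : Type*} [Fintype A] [Nonempty A] (φ : ℝ) (z : A → ℝ) :
    ∑ a, softmin φ z a = 1 := by
  unfold softmin
  rw [← Finset.sum_div]
  exact div_self (ne_of_gt (Finset.sum_pos (fun _ _ => Real.exp_pos _) Finset.univ_nonempty))

lemma dist_upper' {X : Type*} [Fintype X] [DecidableEq X] (q : X → ℝ) (c : ℝ)
    (hq : ∑ z, q z = 1) (hc : ∀ z, c ≤ q z) (y : X) :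
    q y ≤ 1 - ((Fintype.card X : ℝ) - 1) * c := by
  have hcard : ((Finset.univ.erase y).card : ℝ) = (Fintype.card X : ℝ) - 1 := by
    rw [Finset.card_erase_of_mem (Finset.mem_univ y), Finset.card_univ]
    have : 1 ≤ Fintype.card X := Fintype.card_pos_iff.mpr ⟨y⟩
    push_cast [Nat.cast_sub this]
    ring
  have hsum : ((Fintype.card X : ℝ) - 1) * c ≤ ∑ z ∈ Finset.univ.erase y, q z := by
    rw [← hcard]
    calc ((Finset.univ.erase y).card : ℝ) * c = ∑ _z ∈ Finset.univ.erase y, c := by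
          rw [Finset.sum_const, nsmul_eq_mul]
      _ ≤ ∑ z ∈ Finset.univ.erase y, q z := Finset.sum_le_sum fun z _ => hc z
  have hsplit : (∑ z ∈ Finset.univ.erase y, q z) + q y = 1 := by
    rw [Finset.sum_erase_add _ _ (Finset.mem_univ y)]; exact hq
  linarith

lemma pointwise_le_l1 {X : Type*} [Fintype X] (f g : X → ℝ) (y : X) :
    |f y - g y| ≤ l1Dist f g :=
  Finset.single_le_sum (f := fun z => |f z - g z|) (fun i _ => abs_nonneg _) (Finset.mem_univ y)

end Aux

/-- if `p(x'|x,a,μ,μ̃) ≥ c > 0` uniformly, then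
`max_y |𝒫̃₃^{(x,a)}(μ,Q,μ̃)(y) − 𝒫̃₃^{(x,a)}(μ,Q,μ̃')(y)| ≤ (L_p^loc + 2 − |𝒳| c) ‖μ̃ − μ̃'‖₁`. -/
theorem Pt3_lipschitz_in_local_measure
    {X A : Type*} [Fintype X] [Fintype A] [Nonempty X] [Nonempty A] [DecidableEq X]
    (φ : ℝ) (hφ : 0 < φ)
    (p : X → A → (X → ℝ) → (X → ℝ) → X → ℝ)
    (Lpg Lpl : ℝ) (hLpg : 0 ≤ Lpg) (hLpl : 0 ≤ Lpl)
    (hp : ∀ x a μ μt, IsDist μ → IsDist μt → IsDist (p x a μ μt))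
    (hpglob : ∀ x a μ μ' μt, IsDist μ → IsDist μ' → IsDist μt →
      l1Dist (p x a μ μt) (p x a μ' μt) ≤ Lpg * l1Dist μ μ')
    (hploc : ∀ x a μ μt μt', IsDist μ → IsDist μt → IsDist μt' →
      l1Dist (p x a μ μt) (p x a μ μt') ≤ Lpl * l1Dist μt μt')
    (c : ℝ) (hc : 0 < c)
    (hlow : ∀ (x' x : X) (a : A) (μ μt : X → ℝ), IsDist μ → IsDist μt →
      c ≤ p x a μ μt x')
    (x : X) (a : A)
    (μ μt μt' : X → ℝ) (hμ : IsDist μ) (hμt : IsDist μt) (hμt' : IsDist μt')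
    (Q : X → A → ℝ) :
    ∀ y, |Pt3 φ p x a μ Q μt y - Pt3 φ p x a μ Q μt' y| ≤
      (Lpl + 2 - (Fintype.card X : ℝ) * c) * l1Dist μt μt' := by
  intro y
  classical
  set D := l1Dist μt μt' with hD
  have hD0 : 0 ≤ D := by
    have : (0:ℝ) ≤ ∑ z, |μt z - μt' z| := Finset.sum_nonneg fun _ _ => abs_nonneg _
    exact this
  have hCc : (Fintype.card X : ℝ) * c ≤ 1 := by
    obtain ⟨x0⟩ := (inferInstance : Nonempty X)
    have h1 := dist_upper' (p x0 a μ μt) c (hp x0 a μ μt hμ hμt).2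
      (fun z => hlow z x0 a μ μt hμ hμt) x0
    have h2 := hlow x0 x0 a μ μt hμ hμt
    nlinarith
  have hδsum : ∑ x', (μt x' - μt' x') = 0 := by
    rw [Finset.sum_sub_distrib, hμt.2, hμt'.2, sub_self]
  have hδabs : ∀ z, |μt z - μt' z| ≤ D := fun z => pointwise_le_l1 μt μt' z
  -- the kernels
  set K : X → ℝ := fun x' => if x' = x then p x a μ μt y
    else ∑ a', softmin φ (Q x') a' * p x' a' μ μt y with hKdef
  set K' : X → ℝ := fun x' => if x' = x then p x a μ μt' y
    else ∑ a', softmin φ (Q x') a' * p x' a' μ μt' y with hK'def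
  have hrw : ∀ (ν : X → ℝ) (Kk : X → ℝ) (pC : ℝ) (pE : X → A → ℝ),
      (∀ x', Kk x' = if x' = x then pC else ∑ a', softmin φ (Q x') a' * pE x' a') →
      (∑ x' ∈ Finset.univ.erase x, ν x' * ∑ a', softmin φ (Q x') a' * pE x' a')
        + ν x * pC = ∑ x', ν x' * Kk x' := by
    intro ν Kk pC pE hKk
    rw [← Finset.sum_erase_add _ _ (Finset.mem_univ x)]
    congr 1
    · exact Finset.sum_congr rfl fun x' hx' => by
        rw [hKk x', if_neg (Finset.ne_of_mem_erase hx')]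
    · rw [hKk x, if_pos rfl]
  have h1 : Pt3 φ p x a μ Q μt y = (∑ x', μt x' * K x') - μt y := by
    rw [Pt3, ← hrw μt K (p x a μ μt y) (fun x' a' => p x' a' μ μt y) (fun x' => rfl)]
  have h2 : Pt3 φ p x a μ Q μt' y = (∑ x', μt' x' * K' x') - μt' y := by
    rw [Pt3, ← hrw μt' K' (p x a μ μt' y) (fun x' a' => p x' a' μ μt' y) (fun x' => rfl)]
  -- bounds on K
  have hKlow : ∀ x', c ≤ K x' := by
    intro x'
    rw [hKdef]
    by_cases hx : x' = x
    · simp only [hx, if_pos rfl]; exact hlow y x a μ μt hμ hμt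
    · simp only [if_neg hx]
      calc c = ∑ a', softmin φ (Q x') a' * c := by
            rw [← Finset.sum_mul, softmin_sum_one', one_mul]
        _ ≤ ∑ a', softmin φ (Q x') a' * p x' a' μ μt y :=
            Finset.sum_le_sum fun a' _ => mul_le_mul_of_nonneg_left
              (hlow y x' a' μ μt hμ hμt) (softmin_nonneg' φ _ a')
  have hKhigh : ∀ x', K x' ≤ 1 - ((Fintype.card X : ℝ) - 1) * c := by
    intro x'
    rw [hKdef]
    by_cases hx : x' = x
    · simp only [hx, if_pos rfl]
      exact dist_upper' _ c (hp x a μ μt hμ hμt).2 (fun z => hlow z x a μ μt hμ hμt) y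
    · simp only [if_neg hx]
      calc (∑ a', softmin φ (Q x') a' * p x' a' μ μt y)
          ≤ ∑ a', softmin φ (Q x') a' * (1 - ((Fintype.card X : ℝ) - 1) * c) :=
            Finset.sum_le_sum fun a' _ => mul_le_mul_of_nonneg_left
              (dist_upper' _ c (hp x' a' μ μt hμ hμt).2
                (fun z => hlow z x' a' μ μt hμ hμt) y) (softmin_nonneg' φ _ a')
        _ = 1 - ((Fintype.card X : ℝ) - 1) * c := by
            rw [← Finset.sum_mul, softmin_sum_one', one_mul]
  have hKdiff : ∀ x', |K x' - K' x'| ≤ Lpl * D := by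
    intro x'
    rw [hKdef, hK'def]
    by_cases hx : x' = x
    · simp only [hx, if_pos rfl]
      exact le_trans (pointwise_le_l1 _ _ y) (hploc x a μ μt μt' hμ hμt hμt')
    · simp only [if_neg hx]
      rw [← Finset.sum_sub_distrib]
      calc |∑ a', (softmin φ (Q x') a' * p x' a' μ μt y
              - softmin φ (Q x') a' * p x' a' μ μt' y)|
          ≤ ∑ a', |softmin φ (Q x') a' * p x' a' μ μt y
              - softmin φ (Q x') a' * p x' a' μ μt' y| := Finset.abs_sum_le_sum_abs _ _
        _ ≤ ∑ a', softmin φ (Q x') a' * (Lpl * D) := by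
            refine Finset.sum_le_sum fun a' _ => ?_
            rw [← mul_sub, abs_mul, abs_of_nonneg (softmin_nonneg' φ _ a')]
            exact mul_le_mul_of_nonneg_left
              (le_trans (pointwise_le_l1 _ _ y) (hploc x' a' μ μt μt' hμ hμt hμt'))
              (softmin_nonneg' φ _ a')
        _ = Lpl * D := by rw [← Finset.sum_mul, softmin_sum_one', one_mul]
  -- decompose the difference
  have hdec : Pt3 φ p x a μ Q μt y - Pt3 φ p x a μ Q μt' y
      = (∑ x', (μt x' - μt' x') * (K x' - c))
        + (∑ x', μt' x' * (K x' - K' x')) - (μt y - μt' y) := by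
    rw [h1, h2]
    have e1 : ∑ x', (μt x' - μt' x') * (K x' - c)
        = (∑ x', (μt x' - μt' x') * K x') - (∑ x', (μt x' - μt' x')) * c := by
      rw [Finset.sum_mul, ← Finset.sum_sub_distrib]
      exact Finset.sum_congr rfl fun _ _ => by ring
    rw [e1, hδsum, zero_mul, sub_zero]
    have e2 : (∑ x', (μt x' - μt' x') * K x') + (∑ x', μt' x' * (K x' - K' x'))
        = (∑ x', μt x' * K x') - (∑ x', μt' x' * K' x') := by
      rw [← Finset.sum_add_distrib, ← Finset.sum_sub_distrib]
      exact Finset.sum_congr rfl fun _ _ => by ring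
    linarith [e2]
  rw [hdec]
  have b1 : |∑ x', (μt x' - μt' x') * (K x' - c)| ≤ (1 - (Fintype.card X : ℝ) * c) * D := by
    calc |∑ x', (μt x' - μt' x') * (K x' - c)|
        ≤ ∑ x', |(μt x' - μt' x') * (K x' - c)| := Finset.abs_sum_le_sum_abs _ _
      _ ≤ ∑ x', |μt x' - μt' x'| * (1 - (Fintype.card X : ℝ) * c) := by
          refine Finset.sum_le_sum fun x' _ => ?_
          rw [abs_mul, abs_of_nonneg (show (0:ℝ) ≤ K x' - c by linarith [hKlow x'])]
          exact mul_le_mul_of_nonneg_left (by linarith [hKhigh x']) (abs_nonneg _)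
      _ = (1 - (Fintype.card X : ℝ) * c) * D := by
          rw [← Finset.sum_mul, mul_comm]; rfl
  have b2 : |∑ x', μt' x' * (K x' - K' x')| ≤ Lpl * D := by
    calc |∑ x', μt' x' * (K x' - K' x')|
        ≤ ∑ x', |μt' x' * (K x' - K' x')| := Finset.abs_sum_le_sum_abs _ _
      _ ≤ ∑ x', μt' x' * (Lpl * D) := by
          refine Finset.sum_le_sum fun x' _ => ?_
          rw [abs_mul, abs_of_nonneg (hμt'.1 x')]
          exact mul_le_mul_of_nonneg_left (hKdiff x') (hμt'.1 x')
      _ = Lpl * D := by rw [← Finset.sum_mul, hμt'.2, one_mul]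
  have b3 : |μt y - μt' y| ≤ D := hδabs y
  calc |(∑ x', (μt x' - μt' x') * (K x' - c))
        + (∑ x', μt' x' * (K x' - K' x')) - (μt y - μt' y)|
      ≤ |∑ x', (μt x' - μt' x') * (K x' - c)|
        + |∑ x', μt' x' * (K x' - K' x')| + |μt y - μt' y| := by
        exact (abs_sub _ _).trans (by gcongr; exact abs_add_le _ _)
    _ ≤ (1 - (Fintype.card X : ℝ) * c) * D + Lpl * D + D := by gcongr
    _ = (Lpl + 2 - (Fintype.card X : ℝ) * c) * D := by ring
end

section
/- Assume there is c > 0 with p(x'|x,a,μ,μ̃) ≥ c for all arguments, and let L_p^{max} = max(L_p^{glob}, L_p^{loc}) satisfy 2 L_p^{max} < |𝒳|c. Suppose (μ*^φ, Q*^φ, (μ̃*^{φ,(x,a)})_{(x,a)}) satisfy the softmin fixed-point system: for each (x,a), μ̃*^{φ,(x,a)}(y) = ∑_{x'≠x} μ̃*^{φ,(x,a)}(x') ∑_{a'} softmin_φ(Q*^φ(x',·))(a') p(y|x',a',μ*^φ,μ̃*^{φ,(x,a)}) + μ̃*^{φ,(x,a)}(x) p(y|x,a,μ*^φ,μ̃*^{φ,(x,a)});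 and for every x₀, μ*^φ(y) = ∑_{x'} μ*^φ(x') ∑_a softmin_φ(Q*^φ(x',·))(a) p(y|x',a,μ*^φ,μ̃*^{φ,(x₀,α*(x₀))}), where α*(x) is the unique minimizer of a ↦ Q*^φ(x,a), with action gap δ(φ) = min_{x} ( min_{a ≠ α*(x)} Q*^φ(x,a) − Q*^φ(x,α*(x)) ) > 0. Let (μ*, (μ̃*^{(x,a)})_{(x,a)}) be the unique solution of the corresponding pure-policy stationarity system with policy α*: μ̃*^{(x,a)}(y) = ∑_{x'≠x} μ̃*^{(x,a)}(x') p(y|x',α*(x'),μ*,μ̃*^{(x,a)}) + μ̃*^{(x,a)}(x) p(y|x,a,μ*,μ̃*^{(x,a)}) and μ*(y) = ∑_{x'} μ*(x') p(y|x',α*(x'),μ*,μ̃*^{(x,α*(x))}). Then for every (x,a): ‖μ̃*^{φ,(x,a)} − μ̃*^{(x,a)}‖₁ + ‖μ*^φ − μ*‖₁ ≤ 4 |𝒜|^{3/2} exp(−φ δ(φ)) / (|𝒳|c − 2 L_p^{max}). -/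
open Finset

lemma l1Dist_nonneg {X : Type*} [Fintype X] (f g : X → ℝ) : 0 ≤ l1Dist f g :=
  Finset.sum_nonneg fun _ _ => abs_nonneg _

lemma l1Dist_le_two {X : Type*} [Fintype X] {f g : X → ℝ}
    (hf : IsDist f) (hg : IsDist g) : l1Dist f g ≤ 2 := by
  have h : l1Dist f g ≤ ∑ x, (f x + g x) := by
    apply Finset.sum_le_sum
    intro x _
    calc |f x - g x| ≤ |f x| + |g x| := abs_sub _ _
      _ = f x + g x := by rw [abs_of_nonneg (hf.1 x), abs_of_nonneg (hg.1 x)]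
  have h2 : ∑ x, (f x + g x) = 2 := by
    rw [Finset.sum_add_distrib, hf.2, hg.2]; norm_num
  linarith

lemma l1Dist_triangle {X : Type*} [Fintype X] (f g h : X → ℝ) :
    l1Dist f h ≤ l1Dist f g + l1Dist g h := by
  rw [l1Dist, l1Dist, l1Dist, ← Finset.sum_add_distrib]
  apply Finset.sum_le_sum
  intro x _
  calc |f x - h x| = |(f x - g x) + (g x - h x)| := by ring_nf
    _ ≤ |f x - g x| + |g x - h x| := abs_add_le _ _

lemma softmin_isDist {A : Type*} [Fintype A] [Nonempty A] (φ : ℝ) (z : A → ℝ) :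
    IsDist (softmin φ z) := by
  have hZ : 0 < ∑ a', Real.exp (-φ * z a') :=
    Finset.sum_pos (fun a _ => Real.exp_pos _) Finset.univ_nonempty
  constructor
  · intro a
    exact div_nonneg (Real.exp_pos _).le hZ.le
  · unfold softmin
    rw [← Finset.sum_div, div_self hZ.ne']

lemma softmin_tail {A : Type*} [Fintype A] [Nonempty A] [DecidableEq A] {φ δ : ℝ} (hφ : 0 < φ)
    (z : A → ℝ) (b : A) (hz : ∀ a, a ≠ b → δ ≤ z a - z b) :
    ∑ a ∈ Finset.univ.erase b, softmin φ z a ≤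
      ((Fintype.card A : ℝ) - 1) * Real.exp (-(φ * δ)) := by
  have hZ : Real.exp (-φ * z b) ≤ ∑ a', Real.exp (-φ * z a') :=
    Finset.single_le_sum (f := fun a => Real.exp (-φ * z a))
      (fun a _ => (Real.exp_pos _).le) (Finset.mem_univ b)
  have hZpos : 0 < ∑ a', Real.exp (-φ * z a') :=
    Finset.sum_pos (fun a _ => Real.exp_pos _) Finset.univ_nonempty
  have hterm : ∀ a ∈ Finset.univ.erase b, softmin φ z a ≤ Real.exp (-(φ * δ)) := by
    intro a ha
    have hab : a ≠ b := Finset.ne_of_mem_erase ha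
    have h1 : softmin φ z a ≤ Real.exp (-φ * z a) / Real.exp (-φ * z b) := by
      apply div_le_div_of_nonneg_left (Real.exp_pos _).le (Real.exp_pos _) hZ
    have h2 : Real.exp (-φ * z a) / Real.exp (-φ * z b) = Real.exp (-φ * (z a - z b)) := by
      rw [← Real.exp_sub]; ring_nf
    have h3 : Real.exp (-φ * (z a - z b)) ≤ Real.exp (-(φ * δ)) := by
      apply Real.exp_le_exp.mpr
      have := hz a hab
      nlinarith
    calc softmin φ z a ≤ _ := h1
      _ = _ := h2
      _ ≤ _ := h3
  calc ∑ a ∈ Finset.univ.erase b, softmin φ z a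
      ≤ ∑ _a ∈ Finset.univ.erase b, Real.exp (-(φ * δ)) := Finset.sum_le_sum hterm
    _ = ((Fintype.card A : ℝ) - 1) * Real.exp (-(φ * δ)) := by
        rw [Finset.sum_const, nsmul_eq_mul, Finset.card_erase_of_mem (Finset.mem_univ b),
          Finset.card_univ]
        congr 1
        have : 1 ≤ Fintype.card A := Fintype.card_pos
        push_cast [Nat.cast_sub this]
        ring

lemma mix_isDist {X A : Type*} [Fintype X] [Fintype A] (π : A → ℝ) (hπ : IsDist π)
    (f : A → X → ℝ) (hf : ∀ a, IsDist (f a)) : IsDist (fun y => ∑ a, π a * f a y) := by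
  constructor
  · intro y
    exact Finset.sum_nonneg fun a _ => mul_nonneg (hπ.1 a) ((hf a).1 y)
  · rw [Finset.sum_comm]
    calc ∑ a, ∑ y, π a * f a y = ∑ a, π a * ∑ y, f a y := by
          simp [Finset.mul_sum]
      _ = 1 := by simp only [(fun a => (hf a).2)]; simpa using hπ.2

lemma mix_lower {A : Type*} [Fintype A] (π : A → ℝ) (hπ : IsDist π)
    (f : A → ℝ) (c : ℝ) (hf : ∀ a, c ≤ f a) : c ≤ ∑ a, π a * f a := by
  calc c = ∑ a, π a * c := by rw [← Finset.sum_mul, hπ.2, one_mul]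
    _ ≤ ∑ a, π a * f a := Finset.sum_le_sum fun a _ =>
        mul_le_mul_of_nonneg_left (hf a) (hπ.1 a)

lemma mix_l1 {X A : Type*} [Fintype X] [Fintype A] [DecidableEq A] (π : A → ℝ) (hπ : IsDist π)
    (f : A → X → ℝ) (hf : ∀ a, IsDist (f a)) (g : X → ℝ) (b : A) :
    l1Dist (fun y => ∑ a, π a * f a y) g ≤
      2 * (∑ a ∈ Finset.univ.erase b, π a) + l1Dist (f b) g := by
  have key : ∀ y, (∑ a, π a * f a y) - g y
      = (∑ a, π a * (f a y - f b y)) + (f b y - g y) := by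
    intro y
    have : ∑ a, π a * (f a y - f b y) = (∑ a, π a * f a y) - (∑ a, π a) * f b y := by
      rw [Finset.sum_mul, ← Finset.sum_sub_distrib]
      exact Finset.sum_congr rfl fun a _ => by ring
    rw [this, hπ.2]; ring
  have step : l1Dist (fun y => ∑ a, π a * f a y) g ≤
      (∑ a, π a * l1Dist (f a) (f b)) + l1Dist (f b) g := by
    rw [l1Dist]
    have : ∀ y, |(∑ a, π a * f a y) - g y| ≤
        (∑ a, π a * |f a y - f b y|) + |f b y - g y| := by
      intro y
      rw [key y]
      refine (abs_add_le _ _).trans (add_le_add ?_ le_rfl)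
      refine (Finset.abs_sum_le_sum_abs _ _).trans ?_
      apply Finset.sum_le_sum
      intro a _
      rw [abs_mul, abs_of_nonneg (hπ.1 a)]
    calc ∑ y, |(∑ a, π a * f a y) - g y|
        ≤ ∑ y, ((∑ a, π a * |f a y - f b y|) + |f b y - g y|) :=
          Finset.sum_le_sum fun y _ => this y
      _ = (∑ a, π a * l1Dist (f a) (f b)) + l1Dist (f b) g := by
          rw [Finset.sum_add_distrib, Finset.sum_comm]
          simp [l1Dist, Finset.mul_sum]
  refine step.trans (add_le_add ?_ le_rfl)
  have : ∑ a, π a * l1Dist (f a) (f b)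
      = ∑ a ∈ Finset.univ.erase b, π a * l1Dist (f a) (f b) := by
    rw [← Finset.sum_erase_add _ _ (Finset.mem_univ b)]
    simp [l1Dist]
  rw [this, Finset.mul_sum]
  apply Finset.sum_le_sum
  intro a ha
  rw [mul_comm (2:ℝ)]
  exact mul_le_mul_of_nonneg_left (l1Dist_le_two (hf a) (hf b)) (hπ.1 a)

lemma doeblin {X : Type*} [Fintype X] (c D : ℝ) (ν ν' : X → ℝ) (P P' : X → X → ℝ)
    (hν : IsDist ν) (hν' : IsDist ν') (hP : ∀ x, IsDist (P x))
    (hc : ∀ x y, c ≤ P x y) (hD : ∀ x, l1Dist (P x) (P' x) ≤ D)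
    (hfix : ∀ y, ν y = ∑ x, ν x * P x y) (hfix' : ∀ y, ν' y = ∑ x, ν' x * P' x y) :
    (Fintype.card X : ℝ) * c * l1Dist ν ν' ≤ D := by
  have hsum0 : ∑ x, (ν x - ν' x) = 0 := by
    rw [Finset.sum_sub_distrib, hν.2, hν'.2]; ring
  have key : ∀ y, ν y - ν' y =
      ∑ x, ((ν x - ν' x) * (P x y - c) + ν' x * (P x y - P' x y)) := by
    intro y
    have e : ∑ x, ((ν x - ν' x) * (P x y - c) + ν' x * (P x y - P' x y))
        = (∑ x, ν x * P x y) - (∑ x, ν' x * P' x y) - c * ∑ x, (ν x - ν' x) := by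
      rw [Finset.mul_sum, ← Finset.sum_sub_distrib, ← Finset.sum_sub_distrib]
      exact Finset.sum_congr rfl fun x _ => by ring
    rw [e, hsum0, hfix y, hfix' y]; ring
  have habs : ∀ y, |ν y - ν' y| ≤
      (∑ x, |ν x - ν' x| * (P x y - c)) + ∑ x, ν' x * |P x y - P' x y| := by
    intro y
    rw [key y]
    calc |∑ x, ((ν x - ν' x) * (P x y - c) + ν' x * (P x y - P' x y))|
        ≤ ∑ x, |(ν x - ν' x) * (P x y - c) + ν' x * (P x y - P' x y)| :=
          Finset.abs_sum_le_sum_abs _ _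
      _ ≤ ∑ x, (|ν x - ν' x| * (P x y - c) + ν' x * |P x y - P' x y|) := by
          apply Finset.sum_le_sum
          intro x _
          refine (abs_add_le _ _).trans (add_le_add ?_ ?_)
          · rw [abs_mul, abs_of_nonneg (by linarith [hc x y] : (0:ℝ) ≤ P x y - c)]
          · rw [abs_mul, abs_of_nonneg (hν'.1 x)]
      _ = _ := by rw [Finset.sum_add_distrib]
  have main : l1Dist ν ν' ≤ (1 - (Fintype.card X : ℝ) * c) * l1Dist ν ν' + D := by
    have h1 : l1Dist ν ν' ≤
        (∑ x, |ν x - ν' x| * (1 - (Fintype.card X : ℝ) * c)) + ∑ x, ν' x * l1Dist (P x) (P' x) := by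
      calc l1Dist ν ν' ≤ ∑ y, ((∑ x, |ν x - ν' x| * (P x y - c))
            + ∑ x, ν' x * |P x y - P' x y|) := Finset.sum_le_sum fun y _ => habs y
        _ = (∑ x, |ν x - ν' x| * (1 - (Fintype.card X : ℝ) * c)) + ∑ x, ν' x * l1Dist (P x) (P' x) := by
            rw [Finset.sum_add_distrib, Finset.sum_comm,
              Finset.sum_comm (γ := X) (f := fun y x => ν' x * |P x y - P' x y|)]
            congr 1
            · apply Finset.sum_congr rfl
              intro x _
              rw [← Finset.mul_sum, Finset.sum_sub_distrib, (hP x).2,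
                Finset.sum_const, Finset.card_univ, nsmul_eq_mul]
            · apply Finset.sum_congr rfl
              intro x _
              rw [← Finset.mul_sum]; rfl
    have h2 : ∑ x, |ν x - ν' x| * (1 - (Fintype.card X : ℝ) * c) = (1 - (Fintype.card X : ℝ) * c) * l1Dist ν ν' := by
      rw [← Finset.sum_mul, mul_comm]; rfl
    have h3 : ∑ x, ν' x * l1Dist (P x) (P' x) ≤ D := by
      calc ∑ x, ν' x * l1Dist (P x) (P' x) ≤ ∑ x, ν' x * D :=
            Finset.sum_le_sum fun x _ => mul_le_mul_of_nonneg_left (hD x) (hν'.1 x)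
        _ = D := by rw [← Finset.sum_mul, hν'.2, one_mul]
    linarith [h1, h2.symm.le, h3]
  nlinarith [main]

lemma rpow_three_halves (M : ℝ) (hM : 0 ≤ M) : M ^ ((3:ℝ)/2) = M * Real.sqrt M := by
  rcases eq_or_lt_of_le hM with h | h
  · rw [← h, Real.zero_rpow (by norm_num : (3:ℝ)/2 ≠ 0), Real.sqrt_zero, mul_zero]
  · rw [show (3:ℝ)/2 = 1 + 1/2 by norm_num, Real.rpow_add h, Real.rpow_one,
      Real.sqrt_eq_rpow]

lemma two_mul_sub_one_le (M : ℝ) (hM : 1 ≤ M) : 2 * (M - 1) ≤ M * Real.sqrt M := by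
  have hs : Real.sqrt M ^ 2 = M := Real.sq_sqrt (by linarith)
  have hs0 : 0 ≤ Real.sqrt M := Real.sqrt_nonneg M
  nlinarith [mul_nonneg hs0 (sq_nonneg (3 * Real.sqrt M - 4)),
    sq_nonneg (3 * Real.sqrt M - 4)]

lemma final_arith (t L B S E u v w : ℝ) (hL0 : 0 ≤ L) (h2L : 2 * L < t)
    (hu : 0 ≤ u) (hv : 0 ≤ v) (hw : 0 ≤ w) (hB0 : 0 ≤ B) (hE0 : 0 ≤ E)
    (hS0 : 0 ≤ S) (hBS : B ≤ S * E)
    (ku : t * u ≤ B + L * v + L * u)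
    (kw : t * w ≤ B + L * v + L * w)
    (kv : t * v ≤ B + L * v + L * w) :
    u + v ≤ 4 * S * E / (t - 2 * L) := by
  have hK : (0:ℝ) < t - 2 * L := by linarith
  have htL : (0:ℝ) < t - L := by linarith
  have ht0 : (0:ℝ) < t := by linarith
  rw [le_div_iff₀ hK]
  have hv2 : (t - 2 * L) * v ≤ 2 * B := by
    nlinarith [mul_le_mul_of_nonneg_right (le_of_lt h2L) hw]
  have step1 : (t - L) * (u + v) ≤ B + t * v := by nlinarith [ku]
  have step2 : (t - 2 * L) * ((t - L) * (u + v)) ≤ (t - 2 * L) * (B + t * v) :=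
    mul_le_mul_of_nonneg_left step1 hK.le
  have step3 : (t - 2 * L) * (B + t * v) ≤ (t - 2 * L) * B + t * (2 * B) := by
    have h := mul_le_mul_of_nonneg_left hv2 ht0.le
    nlinarith [h]
  have step4 : (t - 2 * L) * B + t * (2 * B) ≤ 4 * (t - L) * B := by
    nlinarith [mul_nonneg hK.le hB0]
  have step5 : 4 * (t - L) * B ≤ (t - L) * (4 * (S * E)) := by
    nlinarith [mul_le_mul_of_nonneg_left hBS htL.le]
  have chain : (t - L) * ((t - 2 * L) * (u + v)) ≤ (t - L) * (4 * (S * E)) := by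
    nlinarith [step2.trans (step3.trans (step4.trans step5))]
  have := le_of_mul_le_mul_left chain htL
  nlinarith [this]

/-- error estimate between the softmin fixed-point system
`(μ*^φ, Q*^φ, (μ̃*^{φ,(x,a)}))` and the pure-policy stationary solution `(μ*, (μ̃*^{(x,a)}))`
associated with the argmin policy `α*` of `Q*^φ` with action gap `δ(φ) > 0`:
`‖μ̃*^{φ,(x,a)} − μ̃*^{(x,a)}‖₁ + ‖μ*^φ − μ*‖₁ ≤ 4|𝒜|^{3/2} exp(−φδ(φ))/(|𝒳|c − 2L_p^max)`. -/
theorem softmin_system_error_estimate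
    {X A : Type*} [Fintype X] [Fintype A] [Nonempty X] [Nonempty A] [DecidableEq X]
    (φ : ℝ) (hφ : 0 < φ)
    (p : X → A → (X → ℝ) → (X → ℝ) → X → ℝ)
    (Lpg Lpl : ℝ) (hLpg : 0 ≤ Lpg) (hLpl : 0 ≤ Lpl)
    (hp : ∀ x a μ μt, IsDist μ → IsDist μt → IsDist (p x a μ μt))
    (hpglob : ∀ x a μ μ' μt, IsDist μ → IsDist μ' → IsDist μt →
      l1Dist (p x a μ μt) (p x a μ' μt) ≤ Lpg * l1Dist μ μ')
    (hploc : ∀ x a μ μt μt', IsDist μ → IsDist μt → IsDist μt' →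
      l1Dist (p x a μ μt) (p x a μ μt') ≤ Lpl * l1Dist μt μt')
    (c : ℝ) (hc : 0 < c)
    (hlow : ∀ (x' x : X) (a : A) (μ μt : X → ℝ), IsDist μ → IsDist μt →
      c ≤ p x a μ μt x')
    (hmax : 2 * max Lpg Lpl < (Fintype.card X : ℝ) * c)
    -- the softmin fixed-point system
    (μφ : X → ℝ) (hμφ : IsDist μφ)
    (Qφ : X → A → ℝ)
    (mtφ : X → A → (X → ℝ)) (hmtφ : ∀ x a, IsDist (mtφ x a))
    (hfp1 : ∀ x a y, mtφ x a y =
      (∑ x' ∈ Finset.univ.erase x,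
          mtφ x a x' * ∑ a', softmin φ (Qφ x') a' * p x' a' μφ (mtφ x a) y)
        + mtφ x a x * p x a μφ (mtφ x a) y)
    -- `α*` is the unique minimizer of `Q*^φ(x,·)`
    (αs : X → A) (hαs : ∀ x a, a ≠ αs x → Qφ x (αs x) < Qφ x a)
    (hfp2 : ∀ (x₀ : X) (y : X), μφ y =
      ∑ x', μφ x' * ∑ a, softmin φ (Qφ x') a * p x' a μφ (mtφ x₀ (αs x₀)) y)
    -- the action gap `δ(φ) > 0`
    (δ : ℝ) (hδ : 0 < δ)
    (hgap : ∀ x a, a ≠ αs x → δ ≤ Qφ x a - Qφ x (αs x))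
    -- the pure-policy stationarity system for `α*`
    (μs : X → ℝ) (hμs : IsDist μs)
    (mts : X → A → (X → ℝ)) (hmts : ∀ x a, IsDist (mts x a))
    (hps1 : ∀ x a y, mts x a y =
      (∑ x' ∈ Finset.univ.erase x, mts x a x' * p x' (αs x') μs (mts x a) y)
        + mts x a x * p x a μs (mts x a) y)
    (hps2 : ∀ (x : X) (y : X), μs y =
      ∑ x', μs x' * p x' (αs x') μs (mts x (αs x)) y) :
    ∀ x a, l1Dist (mtφ x a) (mts x a) + l1Dist μφ μs ≤
      4 * (Fintype.card A : ℝ) ^ ((3 : ℝ) / 2) * Real.exp (-(φ * δ)) /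
        ((Fintype.card X : ℝ) * c - 2 * max Lpg Lpl) := by
  classical
  have hcardA : (1:ℝ) ≤ (Fintype.card A : ℝ) := by exact_mod_cast Fintype.card_pos
  have hE0 : (0:ℝ) < Real.exp (-(φ * δ)) := Real.exp_pos _
  have hB0 : (0:ℝ) ≤ 2 * (((Fintype.card A : ℝ) - 1) * Real.exp (-(φ * δ))) := by
    have : (0:ℝ) ≤ (Fintype.card A : ℝ) - 1 := by linarith
    positivity
  have hv0 : 0 ≤ l1Dist μφ μs := l1Dist_nonneg _ _
  -- the per-(x,a) local estimate
  have key : ∀ (x : X) (a : A),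
      (Fintype.card X : ℝ) * c * l1Dist (mtφ x a) (mts x a)
        ≤ 2 * (((Fintype.card A : ℝ) - 1) * Real.exp (-(φ * δ)))
          + Lpg * l1Dist μφ μs + Lpl * l1Dist (mtφ x a) (mts x a) := by
    intro x a
    apply doeblin c _ (mtφ x a) (mts x a)
      (fun x' y => if x' = x then p x a μφ (mtφ x a) y
        else ∑ a', softmin φ (Qφ x') a' * p x' a' μφ (mtφ x a) y)
      (fun x' y => if x' = x then p x a μs (mts x a) y
        else p x' (αs x') μs (mts x a) y)
      (hmtφ x a) (hmts x a)
    · -- each row of P is a distribution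
      intro x'
      by_cases hx : x' = x
      · simpa [hx] using hp x a μφ (mtφ x a) hμφ (hmtφ x a)
      · simpa [hx] using mix_isDist (softmin φ (Qφ x')) (softmin_isDist φ (Qφ x'))
          (fun a' => p x' a' μφ (mtφ x a))
          (fun a' => hp x' a' μφ (mtφ x a) hμφ (hmtφ x a))
    · -- minorization
      intro x' y
      by_cases hx : x' = x
      · simpa [hx] using hlow y x a μφ (mtφ x a) hμφ (hmtφ x a)
      · simpa [hx] using mix_lower (softmin φ (Qφ x')) (softmin_isDist φ (Qφ x'))
          (fun a' => p x' a' μφ (mtφ x a) y) c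
          (fun a' => hlow y x' a' μφ (mtφ x a) hμφ (hmtφ x a))
    · -- row-wise kernel difference bound
      intro x'
      by_cases hx : x' = x
      · simp only [if_pos hx]
        have t1 := hpglob x a μφ μs (mtφ x a) hμφ hμs (hmtφ x a)
        have t2 := hploc x a μs (mtφ x a) (mts x a) hμs (hmtφ x a) (hmts x a)
        have t3 := l1Dist_triangle (p x a μφ (mtφ x a)) (p x a μs (mtφ x a))
          (p x a μs (mts x a))
        linarith
      · simp only [if_neg hx]
        have hmix := mix_l1 (softmin φ (Qφ x')) (softmin_isDist φ (Qφ x'))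
          (fun a' => p x' a' μφ (mtφ x a))
          (fun a' => hp x' a' μφ (mtφ x a) hμφ (hmtφ x a))
          (p x' (αs x') μs (mts x a)) (αs x')
        have htail := softmin_tail hφ (Qφ x') (αs x') (fun a' h => hgap x' a' h)
        have t1 := hpglob x' (αs x') μφ μs (mtφ x a) hμφ hμs (hmtφ x a)
        have t2 := hploc x' (αs x') μs (mtφ x a) (mts x a) hμs (hmtφ x a) (hmts x a)
        have t3 := l1Dist_triangle (p x' (αs x') μφ (mtφ x a)) (p x' (αs x') μs (mtφ x a))
          (p x' (αs x') μs (mts x a))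
        linarith
    · -- stationarity of mtφ x a
      intro y
      rw [hfp1 x a y, ← Finset.sum_erase_add Finset.univ _ (Finset.mem_univ x)]
      congr 1
      · exact Finset.sum_congr rfl fun x' hx' => by
          simp [Finset.ne_of_mem_erase hx']
      · simp
    · -- stationarity of mts x a
      intro y
      rw [hps1 x a y, ← Finset.sum_erase_add Finset.univ _ (Finset.mem_univ x)]
      congr 1
      · exact Finset.sum_congr rfl fun x' hx' => by
          simp [Finset.ne_of_mem_erase hx']
      · simp
  -- the global estimate (using the base point x₀ := x)
  intro x a
  have keyv : (Fintype.card X : ℝ) * c * l1Dist μφ μs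
      ≤ 2 * (((Fintype.card A : ℝ) - 1) * Real.exp (-(φ * δ)))
        + Lpg * l1Dist μφ μs + Lpl * l1Dist (mtφ x (αs x)) (mts x (αs x)) := by
    apply doeblin c _ μφ μs
      (fun x' y => ∑ a0, softmin φ (Qφ x') a0 * p x' a0 μφ (mtφ x (αs x)) y)
      (fun x' y => p x' (αs x') μs (mts x (αs x)) y)
      hμφ hμs
    · intro x'
      exact mix_isDist (softmin φ (Qφ x')) (softmin_isDist φ (Qφ x'))
        (fun a0 => p x' a0 μφ (mtφ x (αs x)))
        (fun a0 => hp x' a0 μφ (mtφ x (αs x)) hμφ (hmtφ x (αs x)))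
    · intro x' y
      exact mix_lower (softmin φ (Qφ x')) (softmin_isDist φ (Qφ x'))
        (fun a0 => p x' a0 μφ (mtφ x (αs x)) y) c
        (fun a0 => hlow y x' a0 μφ (mtφ x (αs x)) hμφ (hmtφ x (αs x)))
    · intro x'
      have hmix := mix_l1 (softmin φ (Qφ x')) (softmin_isDist φ (Qφ x'))
        (fun a0 => p x' a0 μφ (mtφ x (αs x)))
        (fun a0 => hp x' a0 μφ (mtφ x (αs x)) hμφ (hmtφ x (αs x)))
        (p x' (αs x') μs (mts x (αs x))) (αs x')
      have htail := softmin_tail hφ (Qφ x') (αs x') (fun a' h => hgap x' a' h)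
      have t1 := hpglob x' (αs x') μφ μs (mtφ x (αs x)) hμφ hμs (hmtφ x (αs x))
      have t2 := hploc x' (αs x') μs (mtφ x (αs x)) (mts x (αs x)) hμs
        (hmtφ x (αs x)) (hmts x (αs x))
      have t3 := l1Dist_triangle (p x' (αs x') μφ (mtφ x (αs x)))
        (p x' (αs x') μs (mtφ x (αs x))) (p x' (αs x') μs (mts x (αs x)))
      linarith
    · intro y; exact hfp2 x y
    · intro y; exact hps2 x y
  -- combine everything
  set L := max Lpg Lpl with hLdef
  have hLpgL : Lpg ≤ L := le_max_left _ _
  have hLplL : Lpl ≤ L := le_max_right _ _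
  have hL0 : 0 ≤ L := hLpg.trans hLpgL
  have hu0 : 0 ≤ l1Dist (mtφ x a) (mts x a) := l1Dist_nonneg _ _
  have hw0 : 0 ≤ l1Dist (mtφ x (αs x)) (mts x (αs x)) := l1Dist_nonneg _ _
  have hBS : 2 * (((Fintype.card A : ℝ) - 1) * Real.exp (-(φ * δ)))
      ≤ (Fintype.card A : ℝ) ^ ((3 : ℝ) / 2) * Real.exp (-(φ * δ)) := by
    rw [rpow_three_halves _ (by linarith : (0:ℝ) ≤ (Fintype.card A : ℝ))]
    have h2 := two_mul_sub_one_le (Fintype.card A : ℝ) hcardA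
    nlinarith [h2, hE0.le]
  have hS0 : (0:ℝ) ≤ (Fintype.card A : ℝ) ^ ((3 : ℝ) / 2) :=
    Real.rpow_nonneg (by linarith) _
  refine final_arith ((Fintype.card X : ℝ) * c) L
    (2 * (((Fintype.card A : ℝ) - 1) * Real.exp (-(φ * δ))))
    ((Fintype.card A : ℝ) ^ ((3 : ℝ) / 2)) (Real.exp (-(φ * δ)))
    (l1Dist (mtφ x a) (mts x a)) (l1Dist μφ μs)
    (l1Dist (mtφ x (αs x)) (mts x (αs x)))
    hL0 hmax hu0 hv0 hw0 hB0 hE0.le hS0 hBS ?_ ?_ ?_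
  · have := key x a
    have e1 : Lpg * l1Dist μφ μs ≤ L * l1Dist μφ μs :=
      mul_le_mul_of_nonneg_right hLpgL hv0
    have e2 : Lpl * l1Dist (mtφ x a) (mts x a) ≤ L * l1Dist (mtφ x a) (mts x a) :=
      mul_le_mul_of_nonneg_right hLplL hu0
    linarith
  · have := key x (αs x)
    have e1 : Lpg * l1Dist μφ μs ≤ L * l1Dist μφ μs :=
      mul_le_mul_of_nonneg_right hLpgL hv0
    have e2 : Lpl * l1Dist (mtφ x (αs x)) (mts x (αs x))
        ≤ L * l1Dist (mtφ x (αs x)) (mts x (αs x)) :=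
      mul_le_mul_of_nonneg_right hLplL hw0
    linarith
  · have := keyv
    have e1 : Lpg * l1Dist μφ μs ≤ L * l1Dist μφ μs :=
      mul_le_mul_of_nonneg_right hLpgL hv0
    have e2 : Lpl * l1Dist (mtφ x (αs x)) (mts x (αs x))
        ≤ L * l1Dist (mtφ x (αs x)) (mts x (αs x)) :=
      mul_le_mul_of_nonneg_right hLplL hw0
    linarith
end
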